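/- The price of anarchy of the non-cooperative AP channel selection game is lower bounded by [Σ_n log₂(1 + (P_n/d_n^θ)/(ω̄_n + (Σ_{i≠n} P_i/d_{in}^θ)/|M_n|))] / [Σ_n log₂(1 + (P_n/d_n^θ)/ω̲_n)], where ω̄_n = max_{m∈M_n} ω^n_m and ω̲_n = min_{m∈M_n} ω^n_m, and PoA = min over Nash equilibria a of Σ_n U_n(a) divided by max over all profiles a of Σ_n U_n(a). -/

import Mathlib

/-!
At a Nash equilibrium no player gains by switching channel. Averaging the interference a
player `n` would meet over its `|M n|` channels, some channel carries at most the total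
interference divided by `|M n|`, so the equilibrium rate of `n` is at least the rate with noise
`ω̄_n` and that averaged interference. Conversely every profile gives `n` at most the
interference-free rate with noise `ω̲_n`. Summing over players bounds the worst equilibrium
welfare from below and the optimal welfare from above.
-/

open Finset

section Interference

variable {I C : Type*} [Fintype I] [DecidableEq I] [DecidableEq C]

/-- `q i n` is the power received at `n` from `i`. -/
def interference (q : I → I → ℝ) (a : I → C) (n : I) (c : C) : ℝ :=
  ∑ i ∈ univ.erase n, if a i = c then q i n else 0

variable {q : I → I → ℝ}

lemma interference_nonneg (hq : ∀ i n, i ≠ n → 0 ≤ q i n) (a : I → C) (n : I) (c : C) :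
    0 ≤ interference q a n c :=
  sum_nonneg fun i hi => by
    split_ifs
    · exact hq i n (ne_of_mem_erase hi)
    · exact le_rfl

lemma interference_update_self (a : I → C) (n : I) (c : C) :
    interference q (Function.update a n c) n c = interference q a n c :=
  sum_congr rfl fun i hi => by rw [Function.update_of_ne (ne_of_mem_erase hi)]

/-- Pigeonhole: each player `i` contributes to at most one of the channels in `s`. -/
lemma exists_interference_le_div_card (hq : ∀ i n, i ≠ n → 0 ≤ q i n) {s : Finset C}
    (hs : s.Nonempty) (a : I → C) (n : I) :
    ∃ c ∈ s, interference q a n c ≤ (∑ i ∈ univ.erase n, q i n) / s.card := by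
  apply exists_le_of_sum_le hs
  have hcard : (s.card : ℝ) ≠ 0 := by exact_mod_cast hs.card_pos.ne'
  calc ∑ c ∈ s, interference q a n c
      = ∑ i ∈ univ.erase n, ∑ c ∈ s, if a i = c then q i n else 0 := sum_comm
    _ ≤ ∑ i ∈ univ.erase n, q i n := sum_le_sum fun i hi => by
        rw [sum_ite_eq]
        split_ifs
        · exact le_rfl
        · exact hq i n (ne_of_mem_erase hi)
    _ = ∑ _c ∈ s, (∑ i ∈ univ.erase n, q i n) / s.card := by
        rw [sum_const, nsmul_eq_mul, mul_div_cancel₀ _ hcard]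

end Interference

lemma logb_one_add_div_le_logb_one_add_div {S x y : ℝ} (hS : 0 ≤ S) (hx : 0 < x)
    (hxy : x ≤ y) : Real.logb 2 (1 + S / y) ≤ Real.logb 2 (1 + S / x) :=
  Real.logb_le_logb_of_le one_lt_two (by have := hx.trans_le hxy; positivity) (by gcongr)

section Utility

variable {I C : Type*} [Fintype I] [DecidableEq I] [DecidableEq C]
  {q : I → I → ℝ} {S : I → ℝ} {ω : I → C → ℝ} {B : ℝ} {U : I → (I → C) → ℝ} {n : I}

lemma utility_le_of_mem (hq : ∀ i n, i ≠ n → 0 ≤ q i n) (hB : 0 ≤ B) (hS : 0 ≤ S n)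
    (hU : ∀ n a, U n a = B * Real.logb 2 (1 + S n / (ω n (a n) + interference q a n (a n))))
    {M : Finset C} (hM : M.Nonempty) (hω : ∀ c ∈ M, 0 < ω n c) {a : I → C} (ha : a n ∈ M) :
    U n a ≤ B * Real.logb 2 (1 + S n / M.inf' hM (ω n)) := by
  rw [hU]
  refine mul_le_mul_of_nonneg_left (logb_one_add_div_le_logb_one_add_div hS
    ((lt_inf'_iff hM).2 hω) ?_) hB
  exact (inf'_le _ ha).trans (le_add_of_nonneg_right (interference_nonneg hq a n (a n)))

lemma le_utility_of_forall_update_le (hq : ∀ i n, i ≠ n → 0 ≤ q i n) (hB : 0 ≤ B)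
    (hS : 0 ≤ S n)
    (hU : ∀ n a, U n a = B * Real.logb 2 (1 + S n / (ω n (a n) + interference q a n (a n))))
    {M : Finset C} (hM : M.Nonempty) (hω : ∀ c ∈ M, 0 < ω n c) {a : I → C}
    (hNash : ∀ c ∈ M, U n (Function.update a n c) ≤ U n a) :
    B * Real.logb 2 (1 + S n / (M.sup' hM (ω n) + (∑ i ∈ univ.erase n, q i n) / M.card))
      ≤ U n a := by
  obtain ⟨c, hcM, hc⟩ := exists_interference_le_div_card hq hM a n
  refine le_trans ?_ (hNash c hcM)
  rw [hU, Function.update_self, interference_update_self]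
  exact mul_le_mul_of_nonneg_left (logb_one_add_div_le_logb_one_add_div hS
    (add_pos_of_pos_of_nonneg (hω c hcM) (interference_nonneg hq a n c))
    (add_le_add (le_sup' _ hcM) hc)) hB

end Utility

lemma div_le_div_of_mul_le_of_le_mul {a b c d k : ℝ} (hk : 0 < k) (ha : 0 ≤ a)
    (hac : k * a ≤ c) (hdb : d ≤ k * b) (hcd : c ≤ d) : a / b ≤ c / d := by
  rcases (mul_nonneg hk.le ha |>.trans (hac.trans hcd)).eq_or_lt with hd | hd
  · have : a = 0 := by nlinarith
    simp [this, ← hd]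
  · calc a / b = k * a / (k * b) := (mul_div_mul_left a b hk.ne').symm
      _ ≤ k * a / d := div_le_div_of_nonneg_left (by positivity) hd hdb
      _ ≤ c / d := by gcongr

theorem stmt9_general {I : Type*} [Fintype I] [DecidableEq I] {C : Type*} [DecidableEq C]
    (M : I → Finset C) (hM : ∀ n, (M n).Nonempty)
    (P d : I → ℝ) (D : I → I → ℝ) (ω : I → C → ℝ) (θ B : ℝ)
    (hP : ∀ i, 0 < P i) (hd : ∀ i, 0 < d i)
    (hD : ∀ i j, i ≠ j → 0 < D i j) (hω : ∀ n c, 0 < ω n c)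
    (hB : 0 < B)
    (U : I → (I → C) → ℝ)
    (hU : ∀ n a, U n a = B * Real.logb 2 (1 + (P n / d n ^ θ) /
      (ω n (a n) + ∑ i ∈ Finset.univ.erase n, if a i = a n then P i / D i n ^ θ else 0)))
    (Ξ : Set (I → C))
    (hΞ : Ξ = {a | (∀ n, a n ∈ M n) ∧ ∀ n, ∀ c ∈ M n, U n (Function.update a n c) ≤ U n a})
    (worst opt : ℝ)
    (hworst : IsLeast ((fun a => ∑ n : I, U n a) '' Ξ) worst)
    (hopt : IsGreatest ((fun a => ∑ n : I, U n a) '' {a : I → C | ∀ n, a n ∈ M n}) opt) :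
    (∑ n : I, Real.logb 2 (1 + (P n / d n ^ θ) /
        ((M n).sup' (hM n) (ω n) + (∑ i ∈ Finset.univ.erase n, P i / D i n ^ θ) / (M n).card)))
      / (∑ n : I, Real.logb 2 (1 + (P n / d n ^ θ) / (M n).inf' (hM n) (ω n)))
      ≤ worst / opt := by
  have hS : ∀ n, 0 ≤ P n / d n ^ θ := fun n => by have := hd n; have := hP n; positivity
  have hq : ∀ i n, i ≠ n → 0 ≤ P i / D i n ^ θ := fun i n hin => by
    have := hD i n hin; have := hP i; positivity
  have hω' : ∀ n, ∀ c ∈ M n, 0 < ω n c := fun n c _ => hω n c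
  obtain ⟨a₀, ha₀, rfl⟩ := hworst.1
  obtain ⟨a₁, ha₁, rfl⟩ := hopt.1
  rw [hΞ] at ha₀
  refine div_le_div_of_mul_le_of_le_mul hB ?_ ?_ ?_ (hopt.2 ⟨a₀, ha₀.1, rfl⟩)
  · refine sum_nonneg fun n _ => Real.logb_nonneg one_lt_two (le_add_of_nonneg_right ?_)
    obtain ⟨c, hc⟩ := hM n
    exact div_nonneg (hS n) (add_nonneg ((hω n c).le.trans (le_sup' _ hc))
      (div_nonneg (sum_nonneg fun i hi => hq i n (ne_of_mem_erase hi)) (Nat.cast_nonneg _)))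
  · rw [mul_sum]
    exact sum_le_sum fun n _ => le_utility_of_forall_update_le (q := fun i n => P i / D i n ^ θ)
      hq hB.le (hS n) hU (hM n) (hω' n) (ha₀.2 n)
  · rw [mul_sum]
    exact sum_le_sum fun n _ => utility_le_of_mem (q := fun i n => P i / D i n ^ θ)
      hq hB.le (hS n) hU (hM n) (hω' n) (ha₁ n)

theorem stmt9 {I : Type*} [Fintype I] [DecidableEq I] {C : Type*} [DecidableEq C]
    (M : I → Finset C) (hM : ∀ n, (M n).Nonempty)
    (P d : I → ℝ) (D : I → I → ℝ) (ω : I → C → ℝ) (θ B : ℝ)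
    (hP : ∀ i, 0 < P i) (hd : ∀ i, 0 < d i)
    (hD : ∀ i j, i ≠ j → 0 < D i j) (hω : ∀ n c, 0 < ω n c)
    (hθ : 0 < θ) (hB : 0 < B)
    (U : I → (I → C) → ℝ)
    (hU : ∀ n a, U n a = B * Real.logb 2 (1 + (P n / d n ^ θ) /
      (ω n (a n) + ∑ i ∈ Finset.univ.erase n, if a i = a n then P i / D i n ^ θ else 0)))
    (Ξ : Set (I → C))
    (hΞ : Ξ = {a | (∀ n, a n ∈ M n) ∧ ∀ n, ∀ c ∈ M n, U n (Function.update a n c) ≤ U n a})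
    (hΞne : Ξ.Nonempty)
    (worst opt : ℝ)
    (hworst : IsLeast ((fun a => ∑ n : I, U n a) '' Ξ) worst)
    (hopt : IsGreatest ((fun a => ∑ n : I, U n a) '' {a : I → C | ∀ n, a n ∈ M n}) opt) :
    (∑ n : I, Real.logb 2 (1 + (P n / d n ^ θ) /
        ((M n).sup' (hM n) (ω n) + (∑ i ∈ Finset.univ.erase n, P i / D i n ^ θ) / (M n).card)))
      / (∑ n : I, Real.logb 2 (1 + (P n / d n ^ θ) / (M n).inf' (hM n) (ω n)))
      ≤ worst / opt :=
  stmt9_general M hM P d D ω θ B hP hd hD hω hB U hU Ξ hΞ worst opt hworst hopt
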